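/- Every infinite word w over {P,S} that satisfies w ↠∞ S^ω and w ↠∞ P^ω also satisfies w ↠∞ u for every infinite word u over {P,S}. -/
import Mathlib


/-!
Infinitary rewriting for the weakly orthogonal string rewrite system
over the alphabet `{P, S}` with rules `PS → ε` and `SP → ε`.
-/

namespace PS

/-- The two letters of the alphabet. -/
inductive Letter : Type
  | P : Letter
  | S : Letter
  deriving DecidableEq

open Letter

/-- Finite words over `{P, S}`. -/
abbrev Word : Type := List Letter

/-- Infinite words over `{P, S}`. -/
abbrev IWord : Type := ℕ → Letter

/-- One rewrite step on finite words: delete an adjacent factor `PS` or `SP`. -/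
def FStep (w w' : Word) : Prop :=
  ∃ u v : Word, (w = u ++ [P, S] ++ v ∨ w = u ++ [S, P] ++ v) ∧ w' = u ++ v

/-- The value of a letter: `S` counts `+1` and `P` counts `-1`. -/
def lval : Letter → ℤ
  | S => 1
  | P => -1

/-- `sum(w)` for a finite word `w`: number of `S`'s minus number of `P`'s. -/
def fsum (w : Word) : ℤ := (w.map lval).sum

/-- `sum(w, n)`: the number of `S`'s minus the number of `P`'s among the
first `n` letters of the infinite word `w`. -/
def isum (w : IWord) (n : ℕ) : ℤ := ∑ i ∈ Finset.range n, lval (w i)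

/-- A rewrite step at depth `d` on infinite words: the letters at
positions `d`, `d+1` form `PS` or `SP` and are deleted. -/
def IStepAt (d : ℕ) (w w' : IWord) : Prop :=
  ((w d = P ∧ w (d + 1) = S) ∨ (w d = S ∧ w (d + 1) = P)) ∧
    ∀ i, w' i = if i < d then w i else w (i + 2)

/-- `IRed w u` (written `w ↠∞ u`): there is a strongly convergent infinitary
reduction from `w` with limit `u`.  By compression, reductions of length at
most `ω` suffice; such a reduction is a sequence of rewrite steps (with idle
steps allowed, to accommodate finite reductions) whose depths tend to
infinity and whose terms converge to `u`. -/
def IRed (w u : IWord) : Prop :=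
  ∃ (t : ℕ → IWord) (d : ℕ → Option ℕ),
    t 0 = w ∧
    (∀ n, (d n).elim (t (n + 1) = t n) (fun k => IStepAt k (t n) (t (n + 1)))) ∧
    (∀ m : ℕ, ∃ N, ∀ n ≥ N, ∀ k, d n = some k → m ≤ k) ∧
    (∀ m : ℕ, ∃ N, ∀ n ≥ N, ∀ i ≤ m, t n i = u i)

/-- The constant infinite word `S^ω`. -/
def Somega : IWord := fun _ => S

/-- The constant infinite word `P^ω`. -/
def Pomega : IWord := fun _ => P

/-- The `S`-norm `‖w‖_S = sup_n sum(w, n)` (as an extended real). -/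
noncomputable def Snorm (w : IWord) : EReal := ⨆ n : ℕ, ((isum w n : ℝ) : EReal)

/-- The `P`-norm `‖w‖_P = sup_n (− sum(w, n))` (as an extended real). -/
noncomputable def Pnorm (w : IWord) : EReal := ⨆ n : ℕ, ((-(isum w n) : ℝ) : EReal)

/-- An infinite word is a normal form if it admits no rewrite step. -/
def NormalForm (w : IWord) : Prop := ∀ (d : ℕ) (w' : IWord), ¬ IStepAt d w w'

/-- Infinitary conversion: the equivalence generated by `↠∞`. -/
inductive Conv : IWord → IWord → Prop
  | rel {w u : IWord} : IRed w u → Conv w u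
  | refl (w : IWord) : Conv w w
  | symm {w u : IWord} : Conv w u → Conv u w
  | trans {w u v : IWord} : Conv w u → Conv u v → Conv w v

end PS

namespace PS

open Letter

/-! ### Basic sum lemmas -/

lemma isum_succ (w : IWord) (n : ℕ) : isum w (n + 1) = isum w n + lval (w n) :=
  Finset.sum_range_succ _ _

lemma lval_cases (a : Letter) : lval a = 1 ∨ lval a = -1 := by cases a <;> simp [lval]

lemma eq_S_of_lval (a : Letter) (h : lval a = 1) : a = S := by
  cases a <;> simp_all [lval]

lemma istep_pair_sum {k : ℕ} {v v' : IWord} (h : IStepAt k v v') :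
    lval (v k) + lval (v (k + 1)) = 0 := by
  rcases h.1 with ⟨h1, h2⟩ | ⟨h1, h2⟩ <;> simp [h1, h2, lval]

lemma isum_istep_le {k : ℕ} {v v' : IWord} (h : IStepAt k v v') :
    ∀ n, n ≤ k → isum v' n = isum v n := by
  intro n
  induction n with
  | zero => intro _; simp [isum]
  | succ n ih =>
    intro hn
    have hvn : v' n = v n := by rw [h.2 n, if_pos (by omega)]
    rw [isum_succ, isum_succ, ih (by omega), hvn]

lemma isum_istep_ge {k : ℕ} {v v' : IWord} (h : IStepAt k v v') :
    ∀ n, k ≤ n → isum v' n = isum v (n + 2) := by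
  intro n hn
  induction n, hn using Nat.le_induction with
  | base =>
    have h1 := isum_istep_le h k le_rfl
    have hp := istep_pair_sum h
    have h2 : isum v (k + 2) = isum v k := by
      rw [isum_succ, isum_succ]; omega
    rw [h1, h2]
  | succ n hn ih =>
    have hvn : v' n = v (n + 2) := by rw [h.2 n, if_neg (by omega)]
    have : isum v (n + 1 + 2) = isum v (n + 2) + lval (v (n + 2)) := isum_succ v (n + 2)
    rw [isum_succ, ih, hvn, this]

lemma istep_eq_below {k : ℕ} {v v' : IWord} (h : IStepAt k v v') {i : ℕ} (hi : i < k) :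
    v' i = v i := by rw [h.2 i, if_pos hi]

/-! ### The values of `isum` shrink along reductions -/

lemma red_isum_mem {w u : IWord} (hred : IRed w u) : ∀ n, ∃ m, isum u n = isum w m := by
  obtain ⟨t, d, h0, hstep, _, hconv⟩ := hred
  have hN : ∀ N n, ∃ m, isum (t N) n = isum w m := by
    intro N
    induction N with
    | zero => intro n; exact ⟨n, by rw [h0]⟩
    | succ N ih =>
      intro n
      have hs := hstep N
      rcases hd : d N with _ | k
      · rw [hd] at hs; simp only [Option.elim] at hs
        rw [hs]; exact ih n
      · rw [hd] at hs; simp only [Option.elim] at hs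
        rcases le_or_gt n k with hnk | hnk
        · rw [isum_istep_le hs n hnk]; exact ih n
        · rw [isum_istep_ge hs n (le_of_lt hnk)]; exact ih (n + 2)
  intro n
  obtain ⟨N, hNc⟩ := hconv n
  have : isum u n = isum (t N) n := by
    unfold isum
    apply Finset.sum_congr rfl
    intro i hi
    rw [hNc N le_rfl i (le_of_lt (Finset.mem_range.mp hi))]
  rw [this]; exact hN N n

lemma isum_Somega (n : ℕ) : isum Somega n = n := by
  simp [isum, Somega, lval]

lemma isum_Pomega (n : ℕ) : isum Pomega n = -n := by
  simp [isum, Pomega, lval]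

/-- Arbitrarily high partial sums. -/
def Hi (w : IWord) : Prop := ∀ M : ℤ, ∃ n, M ≤ isum w n

/-- Arbitrarily low partial sums. -/
def Lo (w : IWord) : Prop := ∀ M : ℤ, ∃ n, isum w n ≤ M

lemma hi_of_red_S {w : IWord} (hS : IRed w Somega) : Hi w := by
  intro M
  obtain ⟨m, hm⟩ := red_isum_mem hS M.toNat
  refine ⟨m, ?_⟩
  rw [← hm, isum_Somega]
  exact le_trans (Int.self_le_toNat M) le_rfl

lemma lo_of_red_P {w : IWord} (hP : IRed w Pomega) : Lo w := by
  intro M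
  obtain ⟨m, hm⟩ := red_isum_mem hP (-M).toNat
  refine ⟨m, ?_⟩
  rw [← hm, isum_Pomega]
  have := Int.self_le_toNat (-M)
  omega

lemma hi_ge {x : IWord} (h : Hi x) (M : ℤ) (j : ℕ) : ∃ n, j ≤ n ∧ M ≤ isum x n := by
  set B : ℤ := ∑ k ∈ Finset.range j, |isum x k| with hB
  have hbd : ∀ k, k < j → isum x k ≤ B := by
    intro k hk
    have h1 : |isum x k| ≤ B := by
      apply Finset.single_le_sum (f := fun k => |isum x k|)
      · intro i _; exact abs_nonneg _
      · exact Finset.mem_range.mpr hk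
    have := le_abs_self (isum x k)
    omega
  obtain ⟨n, hn⟩ := h (max M (B + 1))
  refine ⟨n, ?_, ?_⟩
  · by_contra hc
    have := hbd n (by omega)
    have := le_max_right M (B + 1)
    omega
  · have := le_max_left M (B + 1); omega

lemma lo_ge {x : IWord} (h : Lo x) (M : ℤ) (j : ℕ) : ∃ n, j ≤ n ∧ isum x n ≤ M := by
  set B : ℤ := ∑ k ∈ Finset.range j, |isum x k| with hB
  have hbd : ∀ k, k < j → -B ≤ isum x k := by
    intro k hk
    have h1 : |isum x k| ≤ B := by
      apply Finset.single_le_sum (f := fun k => |isum x k|)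
      · intro i _; exact abs_nonneg _
      · exact Finset.mem_range.mpr hk
    have := neg_abs_le (isum x k)
    omega
  obtain ⟨n, hn⟩ := h (min M (-B - 1))
  refine ⟨n, ?_, ?_⟩
  · by_contra hc
    have := hbd n (by omega)
    have := min_le_right M (-B - 1)
    omega
  · have := min_le_left M (-B - 1); omega

/-! ### Finite reductions at bounded depth -/

/-- A step at depth at least `j`. -/
def StepGe (j : ℕ) (a b : IWord) : Prop := ∃ k, j ≤ k ∧ IStepAt k a b

/-- Finitely many steps, all at depth at least `j`. -/
def FRedGe (j : ℕ) : IWord → IWord → Prop := Relation.ReflTransGen (StepGe j)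

lemma fredge_eq_below {j : ℕ} {a b : IWord} (h : FRedGe j a b) :
    ∀ i, i < j → b i = a i := by
  induction h with
  | refl => intro i _; rfl
  | tail _ h2 ih =>
    intro i hi
    obtain ⟨k, hk, hs⟩ := h2
    rw [istep_eq_below hs (by omega)]
    exact ih i hi

/-- Deleting the `ℓ` letters starting at position `j`. -/
def drop (x : IWord) (j ℓ : ℕ) : IWord := fun i => if i < j then x i else x (i + ℓ)

lemma isum_drop_le {x : IWord} {j ℓ : ℕ} : ∀ n, n ≤ j → isum (drop x j ℓ) n = isum x n := by
  intro n
  induction n with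
  | zero => intro _; simp [isum]
  | succ n ih =>
    intro hn
    have : drop x j ℓ n = x n := by rw [drop, if_pos (by omega)]
    rw [isum_succ, isum_succ, ih (by omega), this]

lemma isum_drop_ge {x : IWord} {j ℓ : ℕ} (hsum : isum x (j + ℓ) = isum x j) :
    ∀ n, j ≤ n → isum (drop x j ℓ) n = isum x (n + ℓ) := by
  intro n hn
  induction n, hn using Nat.le_induction with
  | base => rw [isum_drop_le j le_rfl, hsum]
  | succ n hn ih =>
    have h1 : drop x j ℓ n = x (n + ℓ) := by rw [drop, if_neg (by omega)]
    have h2 : n + 1 + ℓ = (n + ℓ) + 1 := by omega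
    rw [isum_succ, ih, h1, h2, isum_succ]

lemma isum_const_seg {x : IWord} {j : ℕ} :
    ∀ m, (∀ i, j ≤ i → i < j + m → x i = x j) →
      isum x (j + m) = isum x j + m * lval (x j) := by
  intro m
  induction m with
  | zero => intro _; simp
  | succ m ih =>
    intro h
    have h1 : x (j + m) = x j := h (j + m) (by omega) (by omega)
    have h2 : j + (m + 1) = (j + m) + 1 := by omega
    rw [h2, isum_succ, ih (fun i h1 h2 => h i h1 (by omega)), h1]
    push_cast
    ring

/-- A balanced segment can be deleted by finitely many steps at depth ≥ `j`. -/
lemma fredge_drop {x : IWord} {j : ℕ} :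
    ∀ ℓ, isum x (j + ℓ) = isum x j → FRedGe j x (drop x j ℓ) := by
  intro ℓ
  induction ℓ using Nat.strong_induction_on generalizing x with
  | _ ℓ ih =>
    match ℓ with
    | 0 =>
      intro _
      have : drop x j 0 = x := by
        funext i; rw [drop]; split <;> simp
      rw [this]
      exact Relation.ReflTransGen.refl
    | 1 =>
      intro hsum
      rw [isum_succ] at hsum
      rcases lval_cases (x j) with h | h <;> omega
    | (m + 2) =>
      intro hsum
      -- find an adjacent pair of distinct letters inside the segment
      have hne : ∃ k, j ≤ k ∧ k + 2 ≤ j + (m + 2) ∧ x k ≠ x (k + 1) := by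
        by_contra hcon
        push_neg at hcon
        have hconst : ∀ i, j ≤ i → i < j + (m + 2) → x i = x j := by
          intro i hji
          induction i, hji using Nat.le_induction with
          | base => intro _; rfl
          | succ i hi ihh =>
            intro hlt
            have := hcon i hi (by omega)
            rw [← this]; exact ihh (by omega)
        have := isum_const_seg (m + 2) hconst
        rcases lval_cases (x j) with h | h <;> rw [h] at this <;> omega
      obtain ⟨k, hjk, hkm, hxk⟩ := hne
      have hstep : IStepAt k x (drop x k 2) := by
        constructor
        · rcases hx1 : x k with _ | _ <;> rcases hx2 : x (k + 1) with _ | _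
          · exact absurd (hx1.trans hx2.symm) hxk
          · left; exact ⟨rfl, rfl⟩
          · right; exact ⟨rfl, rfl⟩
          · exact absurd (hx1.trans hx2.symm) hxk
        · intro i; rfl
      have hpair : isum x (k + 2) = isum x k := by
        have hp := istep_pair_sum hstep
        rw [isum_succ, isum_succ]; omega
      set x₁ := drop x k 2 with hx₁
      have hsum₁ : isum x₁ (j + m) = isum x₁ j := by
        have e1 : isum x₁ j = isum x j := isum_drop_le j hjk
        have e2 : isum x₁ (j + m) = isum x (j + m + 2) :=
          isum_drop_ge hpair (j + m) (by omega)
        have e3 : j + m + 2 = j + (m + 2) := by omega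
        rw [e1, e2, e3, hsum]
      have hrest : FRedGe j x₁ (drop x₁ j m) := ih m (by omega) hsum₁
      have heq : drop x₁ j m = drop x j (m + 2) := by
        funext i
        by_cases hij : i < j
        · rw [drop, drop, if_pos hij, if_pos hij, hx₁, drop, if_pos (by omega)]
        · rw [drop, drop, if_neg hij, if_neg hij, hx₁, drop, if_neg (by omega)]
          congr 1
      rw [heq] at hrest
      exact Relation.ReflTransGen.head ⟨k, hjk, hstep⟩ hrest

/-! ### Flipping letters (duality between `Hi` and `Lo`) -/

def flipL : Letter → Letter
  | P => S
  | S => P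

def Flip (x : IWord) : IWord := fun i => flipL (x i)

lemma lval_flip (a : Letter) : lval (flipL a) = -lval a := by cases a <;> rfl

lemma flip_flip (x : IWord) : Flip (Flip x) = x := by
  funext i; show flipL (flipL (x i)) = x i; cases x i <;> rfl

lemma isum_flip (x : IWord) (n : ℕ) : isum (Flip x) n = -isum x n := by
  unfold isum Flip
  rw [← Finset.sum_neg_distrib]
  exact Finset.sum_congr rfl fun i _ => lval_flip _

lemma istep_flip {k : ℕ} {a b : IWord} (h : IStepAt k a b) :
    IStepAt k (Flip a) (Flip b) := by
  obtain ⟨hpair, hb⟩ := h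
  constructor
  · rcases hpair with ⟨h1, h2⟩ | ⟨h1, h2⟩
    · right; constructor <;> simp [Flip, h1, h2, flipL]
    · left; constructor <;> simp [Flip, h1, h2, flipL]
  · intro i
    show flipL (b i) = _
    rw [hb i]; split <;> rfl

lemma fredge_flip {j : ℕ} {a b : IWord} (h : FRedGe j a b) :
    FRedGe j (Flip a) (Flip b) := by
  induction h with
  | refl => exact Relation.ReflTransGen.refl
  | tail _ h2 ih =>
    obtain ⟨k, hk, hs⟩ := h2
    exact Relation.ReflTransGen.tail ih ⟨k, hk, istep_flip hs⟩

/-! ### Producing any prescribed next letter -/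

lemma extendS {x : IWord} (hHi : Hi x) (hLo : Lo x) (j : ℕ) :
    ∃ y, FRedGe j x y ∧ y j = S ∧ Hi y ∧ Lo y := by
  classical
  have hex : ∃ n, j < n ∧ isum x j + 1 ≤ isum x n := by
    obtain ⟨n, hn1, hn2⟩ := hi_ge hHi (isum x j + 1) (j + 1)
    exact ⟨n, by omega, hn2⟩
  obtain ⟨n, hjn, hval, hmin⟩ :
      ∃ n, j < n ∧ isum x j + 1 ≤ isum x n ∧ ∀ m, j < m → m < n → isum x m ≤ isum x j := by
    refine ⟨Nat.find hex, (Nat.find_spec hex).1, (Nat.find_spec hex).2, ?_⟩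
    intro m h1 h2
    have := Nat.find_min hex h2
    push_neg at this
    have := this h1
    omega
  obtain ⟨n', rfl⟩ : ∃ n', n = n' + 1 := ⟨n - 1, by omega⟩
  have hjn' : j ≤ n' := by omega
  have hsucc : isum x (n' + 1) = isum x n' + lval (x n') := isum_succ x n'
  have hle : isum x n' ≤ isum x j := by
    rcases eq_or_lt_of_le hjn' with h | h
    · rw [← h]
    · exact hmin n' h (by omega)
  have hlv : lval (x n') = 1 := by
    rcases lval_cases (x n') with h | h
    · exact h
    · omega
  have hxS : x n' = S := eq_S_of_lval _ hlv
  have hseg : isum x n' = isum x j := by omega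
  set ℓ := n' - j with hℓ
  have hjl : j + ℓ = n' := by omega
  have hsum : isum x (j + ℓ) = isum x j := by rw [hjl]; exact hseg
  refine ⟨drop x j ℓ, fredge_drop ℓ hsum, ?_, ?_, ?_⟩
  · rw [drop, if_neg (by omega), hjl, hxS]
  · intro M
    obtain ⟨m, hm1, hm2⟩ := hi_ge hHi M (j + ℓ)
    refine ⟨m - ℓ, ?_⟩
    rw [isum_drop_ge hsum (m - ℓ) (by omega)]
    have : m - ℓ + ℓ = m := by omega
    rw [this]; exact hm2
  · intro M
    obtain ⟨m, hm1, hm2⟩ := lo_ge hLo M (j + ℓ)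
    refine ⟨m - ℓ, ?_⟩
    rw [isum_drop_ge hsum (m - ℓ) (by omega)]
    have : m - ℓ + ℓ = m := by omega
    rw [this]; exact hm2

lemma extendP {x : IWord} (hHi : Hi x) (hLo : Lo x) (j : ℕ) :
    ∃ y, FRedGe j x y ∧ y j = P ∧ Hi y ∧ Lo y := by
  have hHi' : Hi (Flip x) := by
    intro M
    obtain ⟨n, hn⟩ := hLo (-M)
    exact ⟨n, by rw [isum_flip]; omega⟩
  have hLo' : Lo (Flip x) := by
    intro M
    obtain ⟨n, hn⟩ := hHi (-M)
    exact ⟨n, by rw [isum_flip]; omega⟩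
  obtain ⟨y', h1, h2, h3, h4⟩ := extendS hHi' hLo' j
  refine ⟨Flip y', ?_, ?_, ?_, ?_⟩
  · have := fredge_flip h1
    rwa [flip_flip] at this
  · show flipL (y' j) = P
    rw [h2]
    rfl
  · intro M
    obtain ⟨n, hn⟩ := h4 (-M)
    exact ⟨n, by rw [isum_flip]; omega⟩
  · intro M
    obtain ⟨n, hn⟩ := h3 (-M)
    exact ⟨n, by rw [isum_flip]; omega⟩

/-! ### Extracting finite paths from `ReflTransGen` -/

lemma rtg_path {α : Type*} {R : α → α → Prop} {a b : α} (h : Relation.ReflTransGen R a b) :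
    ∃ (L : ℕ) (p : ℕ → α), p 0 = a ∧ (∀ i, L ≤ i → p i = b) ∧
      ∀ i, i < L → R (p i) (p (i + 1)) := by
  induction h with
  | refl => exact ⟨0, fun _ => a, rfl, fun _ _ => rfl, fun i hi => absurd hi (Nat.not_lt_zero i)⟩
  | @tail b' c h1 h2 ih =>
    obtain ⟨L, p, hp0, hpb, hps⟩ := ih
    refine ⟨L + 1, fun i => if i ≤ L then p i else c, ?_, ?_, ?_⟩
    · show (if 0 ≤ L then p 0 else c) = a
      rw [if_pos (Nat.zero_le L)]; exact hp0
    · intro i hi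
      show (if i ≤ L then p i else c) = c
      rw [if_neg (by omega)]
    · intro i hi
      show R (if i ≤ L then p i else c) (if i + 1 ≤ L then p (i + 1) else c)
      rcases lt_or_eq_of_le (Nat.lt_succ_iff.mp hi) with h | h
      · rw [if_pos (by omega), if_pos (by omega)]
        exact hps i h
      · rw [h, if_pos le_rfl, if_neg (by omega), hpb L le_rfl]
        exact h2

/-! ### Chaining infinitely many finite reductions into an infinite one -/

/-- Cumulative step counts. -/
def cum (L : ℕ → ℕ) : ℕ → ℕ
  | 0 => 0
  | j + 1 => cum L j + L j + 1

lemma ired_of_chain (w u : IWord) (v : ℕ → IWord) (h0 : v 0 = w)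
    (hstep : ∀ j, FRedGe j (v j) (v (j + 1)))
    (hpre : ∀ j i, i < j → v j i = u i) : IRed w u := by
  classical
  -- extract paths
  choose L p hp0 hpb hps using fun j => rtg_path (hstep j)
  -- cumulative indices
  let c : ℕ → ℕ := cum L
  have hc0 : c 0 = 0 := rfl
  have hcs : ∀ j, c (j + 1) = c j + L j + 1 := fun j => rfl
  have hcmono : StrictMono c := strictMono_nat_of_lt_succ (fun j => by rw [hcs]; omega)
  have hcj : ∀ j, j ≤ c j := by
    intro j
    induction j with
    | zero => omega
    | succ j ih => rw [hcs]; omega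
  -- the stage of an index
  let stage : ℕ → ℕ := fun n =>
    @Nat.findGreatest (fun j => c j ≤ n) (fun j => Nat.decLe (c j) n) n
  have stage_le : ∀ n, c (stage n) ≤ n := by
    intro n
    exact Nat.findGreatest_spec (P := fun j => c j ≤ n) (Nat.zero_le n)
      (show c 0 ≤ n by rw [hc0]; exact Nat.zero_le n)
  have lt_csucc : ∀ n, n < c (stage n + 1) := by
    intro n
    by_contra hcon
    push_neg at hcon
    have h1 : stage n + 1 ≤ n := le_trans (hcj _) hcon
    have h2 : stage n + 1 ≤ stage n := Nat.le_findGreatest h1 hcon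
    omega
  have stage_eq : ∀ j n, c j ≤ n → n < c (j + 1) → stage n = j := by
    intro j n h1 h2
    have hle : j ≤ stage n := Nat.le_findGreatest (le_trans (hcj j) h1) h1
    by_contra hne
    have hlt : j + 1 ≤ stage n := by omega
    have : c (j + 1) ≤ c (stage n) := hcmono.monotone hlt
    have := stage_le n
    omega
  -- the sequence of words and depths
  let t : ℕ → IWord := fun n => p (stage n) (n - c (stage n))
  have hstage_ge : ∀ m n, c m ≤ n → m ≤ stage n := by
    intro m n hmn
    have := lt_csucc n
    have : c m < c (stage n + 1) := by omega
    have h3 : m < stage n + 1 := hcmono.lt_iff_lt.mp this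
    omega
  -- invariant: within stage j, positions below j agree with u
  have hfix : ∀ j r i, i < j → p j r i = u i := by
    intro j r
    induction r with
    | zero =>
      intro i hi
      rw [hp0 j]
      exact hpre j i hi
    | succ r ih =>
      intro i hi
      by_cases hr : r < L j
      · obtain ⟨k, hk, hs⟩ := hps j r hr
        rw [istep_eq_below hs (by omega)]
        exact ih i hi
      · rw [hpb j (r + 1) (by omega), ← hpb j r (by omega)]
        exact ih i hi
  -- the depth function
  let d : ℕ → Option ℕ := fun n =>
    if h : n - c (stage n) < L (stage n) then
      some (hps (stage n) (n - c (stage n)) h).choose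
    else none
  -- basic stage bookkeeping for successor indices
  have key : ∀ n, (d n).elim (t (n + 1) = t n) (fun k => IStepAt k (t n) (t (n + 1)))
      ∧ (∀ k, d n = some k → stage n ≤ k) := by
    intro n
    set j := stage n with hj
    have h1 : c j ≤ n := stage_le n
    have h2 : n < c (j + 1) := lt_csucc n
    have hr : n - c j ≤ L j := by rw [hcs] at h2; omega
    by_cases hcase : n - c j < L j
    · -- a genuine step
      have hstage1 : stage (n + 1) = j := by
        apply stage_eq
        · omega
        · rw [hcs]; omega
      have ht1 : t (n + 1) = p j (n + 1 - c j) := by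
        show p (stage (n + 1)) (n + 1 - c (stage (n + 1))) = _
        rw [hstage1]
      have hsub : n + 1 - c j = (n - c j) + 1 := by omega
      obtain ⟨hk, hs⟩ := (hps j (n - c j) hcase).choose_spec
      have hd : d n = some (hps j (n - c j) hcase).choose := by
        show dite _ _ _ = _
        rw [dif_pos hcase]
      constructor
      · rw [hd]
        simp only [Option.elim]
        rw [ht1, hsub]
        exact hs
      · intro k hdk
        rw [hd] at hdk
        injection hdk with hdk
        rw [← hdk]
        exact hk
    · -- an idle step between stages
      have hrL : n - c j = L j := by omega
      have hn1 : n + 1 = c (j + 1) := by rw [hcs]; omega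
      have hstage1 : stage (n + 1) = j + 1 := by
        apply stage_eq
        · omega
        · rw [hcs (j + 1)]; omega
      have ht1 : t (n + 1) = p (j + 1) 0 := by
        show p (stage (n + 1)) (n + 1 - c (stage (n + 1))) = _
        rw [hstage1, ← hn1, Nat.sub_self]
      have htn : t n = v (j + 1) := by
        show p j (n - c j) = _
        rw [hrL]
        exact hpb j (L j) le_rfl
      have hd : d n = none := by
        show dite _ _ _ = _
        rw [dif_neg hcase]
      constructor
      · rw [hd]
        simp only [Option.elim]
        rw [ht1, hp0 (j + 1), htn]
      · intro k hdk
        rw [hd] at hdk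
        exact absurd hdk (by simp)
  refine ⟨t, d, ?_, fun n => (key n).1, ?_, ?_⟩
  · -- t 0 = w
    have hs0 : stage 0 = 0 := by
      apply stage_eq
      · rw [hc0]
      · rw [hcs, hc0]; omega
    show p (stage 0) (0 - c (stage 0)) = w
    rw [hs0, hc0, Nat.sub_zero, hp0 0, h0]
  · -- depths tend to infinity
    intro m
    refine ⟨c m, fun n hn k hdk => ?_⟩
    have h1 : m ≤ stage n := hstage_ge m n hn
    have h2 := (key n).2 k hdk
    omega
  · -- convergence to u
    intro m
    refine ⟨c (m + 1), fun n hn i him => ?_⟩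
    have h1 : m + 1 ≤ stage n := hstage_ge (m + 1) n hn
    exact hfix (stage n) (n - c (stage n)) i (by omega)

/-- Every infinite word `w` over `{P, S}` that reduces
infinitarily to both `S^ω` and `P^ω` reduces infinitarily to every
infinite word `u` over `{P, S}`. -/
theorem ired_all_of_ired_Somega_Pomega (w : IWord)
    (hS : IRed w Somega) (hP : IRed w Pomega) :
    ∀ u : IWord, IRed w u := by
  intro u
  classical
  have hHi : Hi w := hi_of_red_S hS
  have hLo : Lo w := lo_of_red_P hP
  -- the invariant maintained at each stage
  let Pk : ℕ → IWord → Prop := fun j x => (∀ i, i < j → x i = u i) ∧ Hi x ∧ Lo x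
  have stage : ∀ j x, Pk j x → ∃ y, FRedGe j x y ∧ Pk (j + 1) y := by
    intro j x ⟨hpre, hhi, hlo⟩
    have hext : ∃ y, FRedGe j x y ∧ y j = u j ∧ Hi y ∧ Lo y := by
      rcases hu : u j with _ | _
      · exact extendP hhi hlo j
      · exact extendS hhi hlo j
    obtain ⟨y, h1, h2, h3, h4⟩ := hext
    refine ⟨y, h1, ?_, h3, h4⟩
    intro i hi
    rcases Nat.lt_succ_iff_lt_or_eq.mp hi with h | h
    · rw [fredge_eq_below h1 i h]
      exact hpre i h
    · rw [h]; exact h2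
  -- build the chain by dependent choice
  let step' : ∀ j, {x : IWord // Pk j x} → {y : IWord // Pk (j + 1) y} :=
    fun j x => ⟨(stage j x.1 x.2).choose, (stage j x.1 x.2).choose_spec.2⟩
  let F : ∀ j, {x : IWord // Pk j x} :=
    fun j => Nat.rec ⟨w, fun i hi => absurd hi (Nat.not_lt_zero i), hHi, hLo⟩
      (fun j ih => step' j ih) j
  have hF : ∀ j, F (j + 1) = step' j (F j) := fun j => rfl
  have hFr : ∀ j, FRedGe j (F j).1 (F (j + 1)).1 := by
    intro j
    rw [hF j]
    exact (stage j (F j).1 (F j).2).choose_spec.1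
  exact ired_of_chain w u (fun j => (F j).1) rfl hFr (fun j i hi => (F j).2.1 i hi)

end PS
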